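/- The variance of the standard logistic distribution equals π²/3: the function x ↦ x² · exp(−x)/(1 + exp(−x))² is integrable on ℝ and its integral over ℝ equals π²/3. -/

import Mathlib

open MeasureTheory Real Set

private lemma hasSum_inv_sq_succ :
    HasSum (fun n : ℕ => (1 : ℝ) / ((n : ℝ) + 1) ^ 2) (π ^ 2 / 6) := by
  have h2 : HasSum (fun n : ℕ => (1 : ℝ) / (((n + 1 : ℕ) : ℝ)) ^ 2) (π ^ 2 / 6) := by
    refine (hasSum_nat_add_iff (f := fun n : ℕ => (1 : ℝ) / (n : ℝ) ^ 2) 1).mpr ?_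
    simpa using hasSum_zeta_two
  have hfe : (fun n : ℕ => (1 : ℝ) / ((n : ℝ) + 1) ^ 2)
      = fun n : ℕ => (1 : ℝ) / (((n + 1 : ℕ) : ℝ)) ^ 2 := by
    funext n; push_cast; ring
  rw [hfe]; exact h2

private lemma hasSum_odd_inv_sq :
    HasSum (fun k : ℕ => (1 : ℝ) / (2 * (k : ℝ) + 2) ^ 2) (π ^ 2 / 24) := by
  have h := hasSum_inv_sq_succ.mul_left (1/4 : ℝ)
  have hfe : (fun k : ℕ => (1 : ℝ) / (2 * (k : ℝ) + 2) ^ 2)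
      = fun k : ℕ => (1/4 : ℝ) * ((1:ℝ) / ((k : ℝ) + 1) ^ 2) := by
    funext k
    have : (2 * (k:ℝ) + 2) ^ 2 = 4 * ((k:ℝ)+1)^2 := by ring
    rw [this]
    field_simp
  rw [hfe, show (π^2/24 : ℝ) = (1/4) * (π^2/6) by ring]
  exact h

private lemma hasSum_odd_sq :
    HasSum (fun k : ℕ => (1 : ℝ) / (2 * (k : ℝ) + 1) ^ 2) (π ^ 2 / 8) := by
  have hsum : Summable (fun k : ℕ => (1 : ℝ) / (2 * (k : ℝ) + 1) ^ 2) := by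
    refine Summable.of_nonneg_of_le (fun k => by positivity) (fun k => ?_)
      hasSum_inv_sq_succ.summable
    have h0 : (0:ℝ) ≤ (k:ℝ) := k.cast_nonneg
    have h1 : ((k:ℝ)+1)^2 ≤ (2*(k:ℝ)+1)^2 := by nlinarith
    exact one_div_le_one_div_of_le (by positivity) h1
  have he : HasSum (fun k : ℕ => (1 : ℝ) / (((2 * k : ℕ) : ℝ) + 1) ^ 2)
      (∑' k : ℕ, (1 : ℝ) / (2 * (k : ℝ) + 1) ^ 2) := by
    have hfe : (fun k : ℕ => (1 : ℝ) / (((2 * k : ℕ) : ℝ) + 1) ^ 2)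
        = fun k : ℕ => (1 : ℝ) / (2 * (k : ℝ) + 1) ^ 2 := by
      funext k; push_cast; ring
    rw [hfe]; exact hsum.hasSum
  have ho : HasSum (fun k : ℕ => (1 : ℝ) / (((2 * k + 1 : ℕ) : ℝ) + 1) ^ 2) (π ^ 2 / 24) := by
    have hfe : (fun k : ℕ => (1 : ℝ) / (((2 * k + 1 : ℕ) : ℝ) + 1) ^ 2)
        = fun k : ℕ => (1 : ℝ) / (2 * (k : ℝ) + 2) ^ 2 := by
      funext k; push_cast; ring
    rw [hfe]; exact hasSum_odd_inv_sq
  have htot := HasSum.even_add_odd (f := fun n : ℕ => (1 : ℝ) / ((n : ℝ) + 1) ^ 2) he ho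
  have hu := htot.unique hasSum_inv_sq_succ
  have : (∑' k : ℕ, (1 : ℝ) / (2 * (k : ℝ) + 1) ^ 2) = π ^ 2 / 8 := by linarith
  rw [← this]; exact hsum.hasSum

private lemma hasSum_alt_inv_sq :
    HasSum (fun n : ℕ => (-1 : ℝ) ^ n / ((n : ℝ) + 1) ^ 2) (π ^ 2 / 12) := by
  have he : HasSum (fun k : ℕ => (-1 : ℝ) ^ (2 * k) / (((2 * k : ℕ) : ℝ) + 1) ^ 2) (π ^ 2 / 8) := by
    have hfe : (fun k : ℕ => (-1 : ℝ) ^ (2 * k) / (((2 * k : ℕ) : ℝ) + 1) ^ 2)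
        = fun k : ℕ => (1 : ℝ) / (2 * (k : ℝ) + 1) ^ 2 := by
      funext k; rw [pow_mul]; push_cast; norm_num
    rw [hfe]; exact hasSum_odd_sq
  have ho : HasSum (fun k : ℕ => (-1 : ℝ) ^ (2 * k + 1) / (((2 * k + 1 : ℕ) : ℝ) + 1) ^ 2)
      (-(π ^ 2 / 24)) := by
    have hfe : (fun k : ℕ => (-1 : ℝ) ^ (2 * k + 1) / (((2 * k + 1 : ℕ) : ℝ) + 1) ^ 2)
        = fun k : ℕ => -((1 : ℝ) / (2 * (k : ℝ) + 2) ^ 2) := by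
      funext k; rw [pow_succ, pow_mul]; push_cast; norm_num; ring
    rw [hfe]; exact hasSum_odd_inv_sq.neg
  have htot := HasSum.even_add_odd (f := fun n : ℕ => (-1 : ℝ) ^ n / ((n : ℝ) + 1) ^ 2) he ho
  convert htot using 1; ring


private lemma integrableOn_sq_mul_exp {b : ℝ} (hb : 0 < b) :
    IntegrableOn (fun x : ℝ => x ^ 2 * Real.exp (-(b * x))) (Ioi 0) := by
  have h := integrableOn_rpow_mul_exp_neg_mul_rpow (p := 1) (s := 2) (b := b)
    (by norm_num) one_pos hb
  refine h.congr_fun (fun x hx => ?_) measurableSet_Ioi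
  dsimp only
  rw [Real.rpow_one, show ((2:ℝ)) = ((2:ℕ):ℝ) by norm_num, Real.rpow_natCast, neg_mul]

private lemma integral_sq_mul_exp {b : ℝ} (hb : 0 < b) :
    ∫ x in Ioi 0, x ^ 2 * Real.exp (-(b * x)) = 2 / b ^ 3 := by
  have h3 : Real.Gamma 3 = 2 := by
    rw [show (3:ℝ) = ((2:ℕ):ℝ) + 1 by norm_num, Real.Gamma_nat_eq_factorial]
    norm_num
  calc ∫ x in Ioi 0, x ^ 2 * Real.exp (-(b * x))
      = ∫ x in Ioi 0, x ^ ((3:ℝ) - 1) * Real.exp (-(b * x)) := by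
        refine setIntegral_congr_fun measurableSet_Ioi (fun x hx => ?_)
        rw [show ((3:ℝ) - 1) = ((2:ℕ):ℝ) by norm_num, Real.rpow_natCast]
    _ = (1 / b) ^ (3:ℝ) * Real.Gamma 3 := Real.integral_rpow_mul_exp_neg_mul_Ioi (by norm_num) hb
    _ = 2 / b ^ 3 := by
        rw [h3, show ((3:ℝ)) = ((3:ℕ):ℝ) by norm_num, Real.rpow_natCast, div_pow]
        field_simp

private lemma hasSum_logistic {x : ℝ} (hx : 0 < x) :
    HasSum (fun n : ℕ => (-1 : ℝ) ^ n * (((n : ℝ) + 1) *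
        (x ^ 2 * Real.exp (((n : ℝ) + 1) * (-x)))))
      (x ^ 2 * (Real.exp (-x) / (1 + Real.exp (-x)) ^ 2)) := by
  set r : ℝ := -Real.exp (-x) with hr
  have hr1 : ‖r‖ < 1 := by
    rw [hr, norm_neg, Real.norm_eq_abs, abs_of_pos (Real.exp_pos _)]
    rw [Real.exp_lt_one_iff]
    linarith
  have h := hasSum_coe_mul_geometric_of_norm_lt_one hr1
  have h1 : HasSum (fun n : ℕ => (((n + 1 : ℕ)) : ℝ) * r ^ (n + 1)) (r / (1 - r) ^ 2) := by
    refine (hasSum_nat_add_iff (f := fun n : ℕ => (n : ℝ) * r ^ n) 1).mpr ?_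
    simpa using h
  have h2 := h1.mul_left (-(x ^ 2))
  have hval : -(x ^ 2) * (r / (1 - r) ^ 2)
      = x ^ 2 * (Real.exp (-x) / (1 + Real.exp (-x)) ^ 2) := by
    rw [hr]
    have : (1 : ℝ) - -Real.exp (-x) = 1 + Real.exp (-x) := by ring
    rw [this]
    ring
  rw [hval] at h2
  have hfe : (fun n : ℕ => (-1 : ℝ) ^ n * (((n : ℝ) + 1) *
        (x ^ 2 * Real.exp (((n : ℝ) + 1) * (-x)))))
      = fun n : ℕ => -(x ^ 2) * ((((n + 1 : ℕ)) : ℝ) * r ^ (n + 1)) := by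
    funext n
    rw [hr, show (-Real.exp (-x)) ^ (n + 1) = (-1) ^ (n + 1) * (Real.exp (-x)) ^ (n + 1)
      from neg_pow _ _, ← Real.exp_nat_mul]
    push_cast
    ring
  rw [hfe]; exact h2


/-- The variance of the standard logistic distribution equals π²/3. -/
theorem logistic_variance :
    Integrable (fun x : ℝ => x ^ 2 * (Real.exp (-x) / (1 + Real.exp (-x)) ^ 2))
      (volume : Measure ℝ) ∧
    ∫ x : ℝ, x ^ 2 * (Real.exp (-x) / (1 + Real.exp (-x)) ^ 2) = Real.pi ^ 2 / 3 := by
  set g : ℝ → ℝ := fun x => x ^ 2 * (Real.exp (-x) / (1 + Real.exp (-x)) ^ 2) with hg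
  have hgc : Continuous g := by
    refine Continuous.mul (by continuity) (Continuous.div (by continuity) (by continuity) ?_)
    intro x
    positivity
  have hgnn : ∀ x, 0 ≤ g x := fun x => by rw [hg]; positivity
  have hgeven : ∀ x : ℝ, g (-x) = g x := by
    intro x
    have he : Real.exp x > 0 := Real.exp_pos x
    have he' : Real.exp (-x) > 0 := Real.exp_pos (-x)
    have hinv : Real.exp x * Real.exp (-x) = 1 := by
      rw [← Real.exp_add]; simp
    simp only [hg, neg_neg]
    rw [show (-x) ^ 2 = x ^ 2 by ring]
    congr 1
    field_simp
    nlinarith [hinv]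
  -- integrability on Ioi 0
  have hIoi : IntegrableOn g (Ioi 0) := by
    have hG := integrableOn_sq_mul_exp (b := 1) one_pos
    refine Integrable.mono hG hgc.aestronglyMeasurable.restrict ?_
    filter_upwards [ae_restrict_mem measurableSet_Ioi] with x hx
    rw [Real.norm_eq_abs, Real.norm_eq_abs, abs_of_nonneg (hgnn x),
      abs_of_nonneg (by positivity), one_mul]
    have hle : Real.exp (-x) / (1 + Real.exp (-x)) ^ 2 ≤ Real.exp (-x) := by
      refine div_le_self (Real.exp_pos _).le ?_
      nlinarith [Real.exp_pos (-x)]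
    calc g x ≤ x ^ 2 * Real.exp (-x) := mul_le_mul_of_nonneg_left hle (by positivity)
      _ = x ^ 2 * Real.exp (-x) := rfl
  -- integrability on Iic 0 via reflection
  have h_map_neg : ((volume : Measure ℝ).restrict (Ici 0)).map Neg.neg
      = (volume : Measure ℝ).restrict (Iic (0:ℝ)) := by
    conv => rhs; rw [← Measure.map_neg_eq_self (volume : Measure ℝ),
      measurableEmbedding_neg.restrict_map]
    simp
  have hIci : IntegrableOn g (Ici 0) := by
    rw [integrableOn_Ici_iff_integrableOn_Ioi]; exact hIoi
  have hIic : IntegrableOn g (Iic 0) := by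
    rw [IntegrableOn, ← h_map_neg, measurableEmbedding_neg.integrable_map_iff]
    have : g ∘ Neg.neg = g := funext fun x => hgeven x
    rw [this]
    exact hIci
  have hint : Integrable g (volume : Measure ℝ) := by
    rw [← integrableOn_univ, ← Set.Iic_union_Ioi (a := (0:ℝ))]
    exact hIic.union hIoi
  -- the series computation on Ioi 0
  have key : ∫ x in Ioi 0, g x = π ^ 2 / 6 := by
    set F : ℕ → ℝ → ℝ := fun n x => (-1 : ℝ) ^ n * (((n : ℝ) + 1) *
        (x ^ 2 * Real.exp (((n : ℝ) + 1) * (-x)))) with hF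
    have hFre : ∀ n : ℕ, F n = fun x => ((-1 : ℝ) ^ n * ((n : ℝ) + 1)) *
        (x ^ 2 * Real.exp (-(((n : ℝ) + 1) * x))) := by
      intro n; funext x; simp only [hF, mul_neg]; ring
    have hF_int : ∀ n : ℕ, Integrable (F n) ((volume : Measure ℝ).restrict (Ioi 0)) := by
      intro n
      rw [hFre n]
      exact (integrableOn_sq_mul_exp (b := (n : ℝ) + 1) (by positivity)).const_mul _
    have hnorm : ∀ n : ℕ, (∫ x in Ioi 0, ‖F n x‖) = 2 / ((n : ℝ) + 1) ^ 2 := by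
      intro n
      have heq : ∀ x ∈ Ioi (0:ℝ), ‖F n x‖
          = ((n : ℝ) + 1) * (x ^ 2 * Real.exp (-(((n : ℝ) + 1) * x))) := by
        intro x hx
        rw [hFre n, Real.norm_eq_abs, abs_mul, abs_mul, abs_pow, abs_neg, abs_one, one_pow,
          one_mul, abs_of_nonneg (show (0:ℝ) ≤ (n : ℝ) + 1 by positivity),
          abs_of_nonneg (show (0:ℝ) ≤ x ^ 2 * Real.exp (-(((n : ℝ) + 1) * x)) by positivity)]
      rw [setIntegral_congr_fun measurableSet_Ioi heq, integral_const_mul,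
        integral_sq_mul_exp (by positivity : (0:ℝ) < (n : ℝ) + 1)]
      have hne : ((n : ℝ) + 1) ≠ 0 := by positivity
      field_simp
    have hF_sum : Summable fun n : ℕ => ∫ x in Ioi 0, ‖F n x‖ := by
      have : Summable (fun n : ℕ => (2:ℝ) / ((n : ℝ) + 1) ^ 2) := by
        have h2 := hasSum_inv_sq_succ.summable.mul_left 2
        refine h2.congr fun n => ?_
        rw [mul_one_div]
      exact this.congr fun n => (hnorm n).symm
    have hsum := hasSum_integral_of_summable_integral_norm hF_int hF_sum
    have htsum : (∫ x in Ioi 0, ∑' n : ℕ, F n x) = ∫ x in Ioi 0, g x := by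
      refine setIntegral_congr_fun measurableSet_Ioi (fun x hx => ?_)
      exact (hasSum_logistic hx).tsum_eq
    rw [htsum] at hsum
    have hval : ∀ n : ℕ, (∫ x in Ioi 0, F n x) = (-1 : ℝ) ^ n * (2 / ((n : ℝ) + 1) ^ 2) := by
      intro n
      rw [hFre n, integral_const_mul, integral_sq_mul_exp (by positivity : (0:ℝ) < (n : ℝ) + 1)]
      have hne : ((n : ℝ) + 1) ≠ 0 := by positivity
      field_simp
    have halt : HasSum (fun n : ℕ => ∫ x in Ioi 0, F n x) (π ^ 2 / 6) := by
      have h2 := hasSum_alt_inv_sq.mul_left 2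
      have hfe : (fun n : ℕ => ∫ x in Ioi 0, F n x)
          = fun n : ℕ => 2 * ((-1 : ℝ) ^ n / ((n : ℝ) + 1) ^ 2) := by
        funext n; rw [hval n]; ring
      rw [hfe, show (π ^ 2 / 6 : ℝ) = 2 * (π ^ 2 / 12) by ring]
      exact h2
    exact hsum.unique halt
  -- reflection for the Iic part of the integral
  have hIicInt : (∫ x in Iic (0:ℝ), g x) = ∫ x in Ioi (0:ℝ), g x := by
    calc (∫ x in Iic (0:ℝ), g x) = ∫ x in Iic (0:ℝ), g (-x) := by
          exact setIntegral_congr_fun measurableSet_Iic fun x _ => (hgeven x).symm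
      _ = ∫ x in Ioi (-(0:ℝ)), g x := integral_comp_neg_Iic 0 g
      _ = ∫ x in Ioi (0:ℝ), g x := by norm_num
  refine ⟨hint, ?_⟩
  calc (∫ x : ℝ, g x) = (∫ x in Iic (0:ℝ), g x) + ∫ x in Ioi (0:ℝ), g x :=
        (intervalIntegral.integral_Iic_add_Ioi hIic hIoi).symm
    _ = π ^ 2 / 6 + π ^ 2 / 6 := by rw [hIicInt, key]
    _ = π ^ 2 / 3 := by ring
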